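/- arXiv:1603.09645 — 7 statements merged into one kernel-verified Lean document; each statement's English description precedes it below -/
import Mathlib

section
/- There is no group of order 24n − 2 with exactly three involutions. -/
/-!
When `|G| ≡ 2 (mod 4)` the Sylow `2`-subgroups have order `2`, so `g ↦ ⟨g⟩` is a bijection from the
involutions of `G` onto its Sylow `2`-subgroups. Their number divides `|G|`, but `3 ∤ 24n - 2`.
-/

open Subgroup

namespace Nat

theorem factorization_two_eq_one_of_mod_four_eq_two {m : ℕ} (hm : m % 4 = 2) :
    m.factorization 2 = 1 := by
  obtain ⟨k, rfl⟩ : ∃ k, m = 2 * (2 * k + 1) := ⟨m / 4, by omega⟩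
  rw [Nat.factorization_mul two_ne_zero (by omega), Finsupp.add_apply,
    Nat.prime_two.factorization_self,
    Nat.factorization_eq_zero_of_not_dvd (by omega : ¬ 2 ∣ 2 * k + 1)]

end Nat

section Involution

variable {G : Type*} [Group G]

theorem mem_zpowers_iff_of_orderOf_eq_two {g x : G} (hg : orderOf g = 2) :
    x ∈ zpowers g ↔ x = 1 ∨ x = g := by
  classical
  rw [(orderOf_pos_iff.mp (hg ▸ two_pos)).mem_zpowers_iff_mem_range_orderOf, hg]
  simp [Finset.range_add_one, eq_comm, or_comm]

theorem eq_of_orderOf_eq_two_of_zpowers_eq {g h : G} (hg : orderOf g = 2)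
    (hh : orderOf h = 2) (hgh : zpowers g = zpowers h) : g = h := by
  have hmem : h ∈ zpowers g := hgh ▸ mem_zpowers h
  rcases (mem_zpowers_iff_of_orderOf_eq_two hg).mp hmem with rfl | rfl
  · simp at hh
  · rfl

variable [Finite G]

theorem Sylow.card_dvd_card {p : ℕ} [Fact p.Prime] : Nat.card (Sylow p G) ∣ Nat.card G :=
  let P : Sylow p G := default
  P.card_dvd_index.trans P.index_dvd_card

/-- If the Sylow `2`-subgroups have order `2`, each is generated by a unique involution. -/
noncomputable def involutionEquivSylowTwo (hG : (Nat.card G).factorization 2 = 1) :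
    {g : G // orderOf g = 2} ≃ Sylow 2 G :=
  have : Fact (Nat.Prime 2) := ⟨Nat.prime_two⟩
  have card_zpowers : ∀ g : {g : G // orderOf g = 2},
      Nat.card (zpowers g.1) = 2 ^ (Nat.card G).factorization 2 := fun g => by
    rw [Nat.card_zpowers, g.2, hG, pow_one]
  Equiv.ofBijective (fun g => Sylow.ofCard (zpowers g.1) (card_zpowers g)) <| by
    constructor
    · intro g h hgh
      exact Subtype.ext <| eq_of_orderOf_eq_two_of_zpowers_eq g.2 h.2 <| by
        simpa [Sylow.coe_ofCard] using congrArg (fun P : Sylow 2 G => (P : Subgroup G)) hgh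
    · intro P
      have hP : Nat.card P = 2 := by rw [P.card_eq_multiplicity, hG, pow_one]
      obtain ⟨g, hg⟩ := exists_prime_orderOf_dvd_card' (G := P) 2 (by rw [hP])
      have hg' : orderOf (g : G) = 2 := by rw [Subgroup.orderOf_coe, hg]
      refine ⟨⟨g, hg'⟩, Sylow.ext ?_⟩
      rw [Sylow.coe_ofCard]
      refine eq_of_le_of_card_ge ((zpowers_le).mpr g.2) ?_
      rw [hP, Nat.card_zpowers, hg']

end Involution

/-- There is no group of order `24 n - 2` (with `n ≥ 1`) having exactly three involutions. -/
theorem no_group_card_24n_sub_two_with_three_involutions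
    {G : Type*} [Group G] [Fintype G] (n : ℕ) (hn : 1 ≤ n)
    (hcard : Fintype.card G = 24 * n - 2) :
    Nat.card {g : G // orderOf g = 2} ≠ 3 := by
  intro h3
  have hG : Nat.card G = 24 * n - 2 := by rw [Nat.card_eq_fintype_card, hcard]
  have hfac : (Nat.card G).factorization 2 = 1 :=
    Nat.factorization_two_eq_one_of_mod_four_eq_two (by omega)
  have : Fact (Nat.Prime 2) := ⟨Nat.prime_two⟩
  have hdvd : Nat.card (Sylow 2 G) ∣ Nat.card G := Sylow.card_dvd_card
  rw [← Nat.card_congr (involutionEquivSylowTwo hfac), h3, hG] at hdvd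
  omega
end

section
/- There is no group of order 24n + 10 with exactly three involutions. -/
/-!
If `|G| = 2m` with `m` odd, the Sylow 2-subgroups have order two, so they are exactly the
subgroups generated by the involutions, and distinct involutions generate distinct ones. Hence the
number of involutions is the number of Sylow 2-subgroups, which divides their index `m`.
For `|G| = 24n + 10` this index is `12n + 5`, which is not divisible by `3`.
-/

open Subgroup

section

variable {G : Type*} [Group G]

lemma eq_of_mem_zpowers_of_orderOf_eq_two {x y : G} (hx : x ≠ 1) (hy : orderOf y = 2)
    (hxy : x ∈ zpowers y) : x = y := by
  have hcard : Nat.card (zpowers y) = 2 := by rw [Nat.card_zpowers, hy]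
  obtain ⟨z, -, hz⟩ := (Nat.card_eq_two_iff' (1 : zpowers y)).mp hcard
  have hx1 : (⟨x, hxy⟩ : zpowers y) ≠ 1 := ne_of_apply_ne Subtype.val hx
  have hy1 : (⟨y, mem_zpowers y⟩ : zpowers y) ≠ 1 :=
    ne_of_apply_ne Subtype.val (show y ≠ 1 by rintro rfl; simp at hy)
  exact congrArg Subtype.val ((hz _ hx1).trans (hz _ hy1).symm)

lemma exists_orderOf_eq_prime_zpowers_eq {p : ℕ} [Fact p.Prime] {H : Subgroup G}
    (hH : Nat.card H = p) : ∃ g : G, orderOf g = p ∧ zpowers g = H := by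
  have : Finite H := Nat.finite_of_card_ne_zero (hH ▸ (Fact.out : p.Prime).ne_zero)
  obtain ⟨g, hg⟩ := exists_prime_orderOf_dvd_card' (G := H) p (by rw [hH])
  have hg' : orderOf (g : G) = p := by rw [orderOf_coe, hg]
  refine ⟨g, hg', eq_of_le_of_card_ge (zpowers_le.mpr g.2) ?_⟩
  rw [hH, Nat.card_zpowers, hg']

noncomputable def involutionEquivSubgroupCardEqTwo :
    {g : G // orderOf g = 2} ≃ {H : Subgroup G // Nat.card H = 2} :=
  Equiv.ofBijective (fun g => ⟨zpowers g.1, by rw [Nat.card_zpowers, g.2]⟩) <| by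
    have : Fact (Nat.Prime 2) := ⟨Nat.prime_two⟩
    refine ⟨fun x y hxy => Subtype.ext ?_, fun H => ?_⟩
    · have hx1 : x.1 ≠ 1 := fun h => by simpa [h] using x.2
      have hzpowers : zpowers x.1 = zpowers y.1 := congrArg Subtype.val hxy
      exact eq_of_mem_zpowers_of_orderOf_eq_two hx1 y.2 (hzpowers ▸ mem_zpowers x.1)
    · obtain ⟨g, hg, hgH⟩ := exists_orderOf_eq_prime_zpowers_eq H.2
      exact ⟨⟨g, hg⟩, Subtype.ext hgH⟩

end

def Sylow.equivSubgroupCardEq {G : Type*} [Group G] [Finite G] (p : ℕ) [Fact p.Prime] :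
    Sylow p G ≃ {H : Subgroup G // Nat.card H = p ^ (Nat.card G).factorization p} where
  toFun P := ⟨P, P.card_eq_multiplicity⟩
  invFun H := Sylow.ofCard H.1 H.2
  left_inv _ := rfl
  right_inv _ := rfl

lemma card_involutions_dvd_of_factorization_two_eq_one {G : Type*} [Group G] [Finite G]
    (h : (Nat.card G).factorization 2 = 1) :
    Nat.card {g : G // orderOf g = 2} ∣ Nat.card G / 2 := by
  have : Fact (Nat.Prime 2) := ⟨Nat.prime_two⟩
  have hcard : Nat.card {g : G // orderOf g = 2} = Nat.card (Sylow 2 G) := by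
    rw [Nat.card_congr involutionEquivSubgroupCardEqTwo,
      Nat.card_congr (Sylow.equivSubgroupCardEq 2), h, pow_one]
  obtain ⟨P⟩ : Nonempty (Sylow 2 G) := inferInstance
  have hindex : (P : Subgroup G).index = Nat.card G / 2 := by
    rw [← (P : Subgroup G).index_mul_card, P.card_eq_multiplicity, h, pow_one,
      Nat.mul_div_cancel _ two_pos]
  exact hcard ▸ hindex ▸ P.card_dvd_index

lemma Nat.factorization_two_mul_of_odd {m : ℕ} (hm : Odd m) : (2 * m).factorization 2 = 1 := by
  rw [Nat.factorization_mul two_ne_zero hm.pos.ne', Finsupp.add_apply,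
    Nat.prime_two.factorization_self, Nat.factorization_eq_zero_of_not_dvd hm.not_two_dvd_nat]

/-- There is no group of order `24 n + 10` having exactly three involutions. -/
theorem no_group_card_24n_add_ten_with_three_involutions
    {G : Type*} [Group G] [Fintype G] (n : ℕ)
    (hcard : Fintype.card G = 24 * n + 10) :
    Nat.card {g : G // orderOf g = 2} ≠ 3 := by
  have hG : Nat.card G = 2 * (12 * n + 5) := by rw [Nat.card_eq_fintype_card, hcard]; ring
  have hdvd := card_involutions_dvd_of_factorization_two_eq_one
    (hG ▸ Nat.factorization_two_mul_of_odd ⟨6 * n + 2, by ring⟩)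
  rw [hG, Nat.mul_div_cancel_left _ two_pos] at hdvd
  intro h3
  rw [h3] at hdvd
  omega
end

section
/- If a finite group G has a normal subgroup N of index 2 whose Sylow 2-subgroup is central in N, then N has a normal complement to its Sylow 2-subgroup, i.e., N has a normal subgroup of odd order whose index in N is the order of the Sylow 2-subgroup. -/
open Subgroup

/-- Burnside's transfer theorem in the case `C_G(P) = G`. -/
theorem Sylow.exists_normal_isComplement'_of_le_center {G : Type*} [Group G] [Finite G]
    {p : ℕ} [Fact p.Prime] (P : Sylow p G) (hP : (P : Subgroup G) ≤ center G) :
    ∃ K : Subgroup G, K.Normal ∧ ¬p ∣ Nat.card K ∧ IsComplement' K P := by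
  have hP' : normalizer (P : Set G) ≤ centralizer (P : Set G) :=
    le_top.trans (centralizer_eq_top_iff_subset.mpr hP).ge
  exact ⟨_, (MonoidHom.transferSylow P hP').normal_ker,
    MonoidHom.not_dvd_card_ker_transferSylow P hP', MonoidHom.ker_transferSylow_isComplement' P hP'⟩

theorem normal_two_complement_of_central_sylow_general
    {G : Type*} [Group G] [Fintype G] (N : Subgroup G)
    (P : Sylow 2 ↥N) (hP : (P : Subgroup ↥N) ≤ Subgroup.center ↥N) :
    ∃ O : Subgroup ↥N, O.Normal ∧ Odd (Nat.card O) ∧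
      O ⊓ (P : Subgroup ↥N) = ⊥ ∧ O ⊔ (P : Subgroup ↥N) = ⊤ := by
  obtain ⟨O, hO, hodd, hcompl⟩ := P.exists_normal_isComplement'_of_le_center hP
  exact ⟨O, hO, Nat.odd_iff.mpr (Nat.two_dvd_ne_zero.mp hodd), hcompl.disjoint.eq_bot,
    hcompl.sup_eq_top⟩

/-- If a finite group `G` has a normal subgroup `N` of index 2 whose Sylow 2-subgroup is
central in `N`, then `N` has a normal complement to its Sylow 2-subgroup: a normal
subgroup of odd order trivially intersecting the Sylow 2-subgroup and generating `N`
together with it. -/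
theorem normal_two_complement_of_central_sylow
    {G : Type*} [Group G] [Fintype G] (N : Subgroup G) [N.Normal] (hN : N.index = 2)
    (P : Sylow 2 ↥N) (hP : (P : Subgroup ↥N) ≤ Subgroup.center ↥N) :
    ∃ O : Subgroup ↥N, O.Normal ∧ Odd (Nat.card O) ∧
      O ⊓ (P : Subgroup ↥N) = ⊥ ∧ O ⊔ (P : Subgroup ↥N) = ⊤ :=
  normal_two_complement_of_central_sylow_general N P hP
end

section
/- The set F = {{(0,0),(1,i),(1,−i)} : 1 ≤ i ≤ n} is a difference family in Z3 × Z_{2n+1} relative to the subgroup Z3 × {0}: the differences of elements within blocks of F cover every element of Z3 × Z_{2n+1} outside Z3 × {0} exactly once. -/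
/-! The differences of `{(0, 0), (1, c), (1, -c)}` are `(1, ±c)`, `(2, ±c)` and `(0, ±2c)`. Their
first coordinate tells which two elements of the block they come from, and the second one then
determines `c` up to sign, because `2` is invertible in `ZMod (2n + 1)`. As `{1, …, n}` contains
exactly one of `b` and `-b` for every `b ≠ 0`, each `(a, b)` with `b ≠ 0` is a difference in
exactly one block, and no `(a, 0)` is. -/

section BlockDifferences

variable {R : Type*} [CommRing R]

def block (c : R) : Set (ZMod 3 × R) := {(0, 0), (1, c), (1, -c)}

lemma block_neg (c : R) : block (-c) = block c := by
  rw [block, block, neg_neg, Set.pair_comm]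

/-- With `s` ranging over `{c, -c}`, these are the ordered pairs of distinct elements of
`block c`. -/
def IsBlockPair (s : R) (x y : ZMod 3 × R) : Prop :=
  x = (1, s) ∧ y = (0, 0) ∨ x = (0, 0) ∧ y = (1, s) ∨ x = (1, s) ∧ y = (1, -s)

lemma exists_isBlockPair_of_mem_block {c : R} {x y : ZMod 3 × R} (hx : x ∈ block c)
    (hy : y ∈ block c) (hxy : x ≠ y) : ∃ s, (s = c ∨ s = -c) ∧ IsBlockPair s x y := by
  simp only [block, Set.mem_insert_iff, Set.mem_singleton_iff] at hx hy
  rcases hx with rfl | rfl | rfl <;> rcases hy with rfl | rfl | rfl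
  all_goals first
    | exact absurd rfl hxy
    | exact ⟨c, .inl rfl, .inl ⟨rfl, rfl⟩⟩
    | exact ⟨-c, .inr rfl, .inl ⟨rfl, rfl⟩⟩
    | exact ⟨c, .inl rfl, .inr (.inl ⟨rfl, rfl⟩)⟩
    | exact ⟨-c, .inr rfl, .inr (.inl ⟨rfl, rfl⟩)⟩
    | exact ⟨c, .inl rfl, .inr (.inr ⟨rfl, rfl⟩)⟩
    | exact ⟨-c, .inr rfl, .inr (.inr ⟨rfl, by rw [neg_neg]⟩)⟩

namespace IsBlockPair

variable {s t : R} {x y x' y' : ZMod 3 × R}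

lemma mem_block (h : IsBlockPair s x y) : x ∈ block s ∧ y ∈ block s := by
  rcases h with ⟨rfl, rfl⟩ | ⟨rfl, rfl⟩ | ⟨rfl, rfl⟩ <;> simp [block]

lemma sub_snd_ne_zero (h2 : IsUnit (2 : R)) (hs : s ≠ 0) (h : IsBlockPair s x y) :
    (x - y).2 ≠ 0 := by
  rcases h with ⟨rfl, rfl⟩ | ⟨rfl, rfl⟩ | ⟨rfl, rfl⟩
  · simpa using hs
  · simpa using hs
  · simpa [← two_mul, h2.mul_right_eq_zero] using hs

lemma eq_of_sub_eq (h2 : IsUnit (2 : R)) (h : IsBlockPair s x y) (h' : IsBlockPair t x' y')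
    (hsub : x - y = x' - y') : s = t ∧ x = x' ∧ y = y' := by
  rcases h with ⟨rfl, rfl⟩ | ⟨rfl, rfl⟩ | ⟨rfl, rfl⟩ <;>
    rcases h' with ⟨rfl, rfl⟩ | ⟨rfl, rfl⟩ | ⟨rfl, rfl⟩ <;>
    simp only [Prod.mk_sub_mk, Prod.mk.injEq] at hsub
  all_goals try exact absurd hsub.1 (by decide)
  · obtain rfl : s = t := by simpa using hsub.2
    simp
  · obtain rfl : s = t := by simpa using hsub.2
    simp
  · obtain rfl : s = t := h2.mul_left_cancel (by linear_combination hsub.2)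
    simp

end IsBlockPair

lemma exists_isBlockPair_sub_eq (h2 : IsUnit (2 : R)) {g : ZMod 3 × R} (hg : g.2 ≠ 0) :
    ∃ s ≠ 0, ∃ x y, IsBlockPair s x y ∧ x - y = g := by
  obtain ⟨a, b⟩ := g
  obtain rfl | rfl | rfl : a = 0 ∨ a = 1 ∨ a = 2 := by clear hg; revert a; decide
  · refine ⟨h2.unit⁻¹ * b, ?_, (1, _), (1, _), .inr (.inr ⟨rfl, rfl⟩), ?_⟩
    · exact (Units.mul_right_eq_zero _).not.mpr hg
    · have := h2.mul_val_inv
      simp only [Prod.mk_sub_mk, sub_self, Prod.mk.injEq, true_and]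
      linear_combination b * this
  · exact ⟨b, hg, (1, b), (0, 0), .inl ⟨rfl, rfl⟩, by simp⟩
  · refine ⟨-b, neg_ne_zero.mpr hg, (0, 0), (1, -b), .inr (.inl ⟨rfl, rfl⟩), ?_⟩
    ext
    · exact (by decide : (0 : ZMod 3) - 1 = 2)
    · simp

end BlockDifferences

namespace ZMod

lemma isUnit_two_of_odd {m : ℕ} (hm : Odd m) : IsUnit (2 : ZMod m) := by
  exact_mod_cast (isUnit_iff_coprime 2 m).mpr (Nat.coprime_two_left.mpr hm)

lemma natCast_ne_zero_of_pos_of_lt {m i : ℕ} (h0 : 0 < i) (hm : i < m) : (i : ZMod m) ≠ 0 :=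
  (natCast_eq_zero_iff i m).not.mpr (Nat.not_dvd_of_pos_of_lt h0 hm)

lemma existsUnique_natCast_eq_or_eq_neg {n : ℕ} {b : ZMod (2 * n + 1)} (hb : b ≠ 0) :
    ∃! i, i ∈ Finset.Icc 1 n ∧ ((i : ZMod (2 * n + 1)) = b ∨ (i : ZMod (2 * n + 1)) = -b) := by
  have hlt : b.val < 2 * n + 1 := val_lt b
  have hpos : 0 < b.val := val_pos.mpr hb
  obtain ⟨i, hi, hib⟩ : ∃ i ∈ Finset.Icc 1 n,
      (i : ZMod (2 * n + 1)) = b ∨ (i : ZMod (2 * n + 1)) = -b := by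
    by_cases hle : b.val ≤ n
    · exact ⟨b.val, Finset.mem_Icc.mpr ⟨hpos, hle⟩, .inl (natCast_zmod_val b)⟩
    · refine ⟨2 * n + 1 - b.val, Finset.mem_Icc.mpr ⟨by omega, by omega⟩, .inr ?_⟩
      rw [Nat.cast_sub hlt.le, natCast_self, natCast_zmod_val, zero_sub]
  refine ⟨i, ⟨hi, hib⟩, fun j ⟨hj, hjb⟩ => ?_⟩
  rw [Finset.mem_Icc] at hi hj
  have hsum : ((j + i : ℕ) : ZMod (2 * n + 1)) ≠ 0 :=
    natCast_ne_zero_of_pos_of_lt (by omega) (by omega)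
  rcases hib with hib | hib <;> rcases hjb with hjb | hjb
  · have := congrArg val (hjb.trans hib.symm)
    rwa [val_natCast_of_lt (by omega), val_natCast_of_lt (by omega)] at this
  · exact absurd (by push_cast; rw [hib, hjb]; ring) hsum
  · exact absurd (by push_cast; rw [hib, hjb]; ring) hsum
  · have := congrArg val (hjb.trans hib.symm)
    rwa [val_natCast_of_lt (by omega), val_natCast_of_lt (by omega)] at this

end ZMod

/-- The family of blocks `B_i = {(0,0), (1,i), (1,-i)}`, `1 ≤ i ≤ n`, is a difference
family in `ℤ₃ × ℤ_{2n+1}` relative to the subgroup `ℤ₃ × {0}`: every element outside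
`ℤ₃ × {0}` arises exactly once as a difference of distinct elements of a block, and
no element of `ℤ₃ × {0}` so arises. -/
theorem difference_family_Z3_Z2n1 (n : ℕ) :
    ∀ g : ZMod 3 × ZMod (2 * n + 1),
      (g.2 ≠ 0 →
        ∃! p : ℕ × (ZMod 3 × ZMod (2 * n + 1)) × (ZMod 3 × ZMod (2 * n + 1)),
          p.1 ∈ Finset.Icc 1 n ∧
          p.2.1 ∈ ({((0 : ZMod 3), (0 : ZMod (2 * n + 1))),
                     (1, (p.1 : ZMod (2 * n + 1))), (1, -(p.1 : ZMod (2 * n + 1)))} :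
                    Set (ZMod 3 × ZMod (2 * n + 1))) ∧
          p.2.2 ∈ ({((0 : ZMod 3), (0 : ZMod (2 * n + 1))),
                     (1, (p.1 : ZMod (2 * n + 1))), (1, -(p.1 : ZMod (2 * n + 1)))} :
                    Set (ZMod 3 × ZMod (2 * n + 1))) ∧
          p.2.1 ≠ p.2.2 ∧ p.2.1 - p.2.2 = g) ∧
      (g.2 = 0 →
        ¬ ∃ p : ℕ × (ZMod 3 × ZMod (2 * n + 1)) × (ZMod 3 × ZMod (2 * n + 1)),
          p.1 ∈ Finset.Icc 1 n ∧
          p.2.1 ∈ ({((0 : ZMod 3), (0 : ZMod (2 * n + 1))),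
                     (1, (p.1 : ZMod (2 * n + 1))), (1, -(p.1 : ZMod (2 * n + 1)))} :
                    Set (ZMod 3 × ZMod (2 * n + 1))) ∧
          p.2.2 ∈ ({((0 : ZMod 3), (0 : ZMod (2 * n + 1))),
                     (1, (p.1 : ZMod (2 * n + 1))), (1, -(p.1 : ZMod (2 * n + 1)))} :
                    Set (ZMod 3 × ZMod (2 * n + 1))) ∧
          p.2.1 ≠ p.2.2 ∧ p.2.1 - p.2.2 = g) := by
  have h2 : IsUnit (2 : ZMod (2 * n + 1)) := ZMod.isUnit_two_of_odd (odd_two_mul_add_one n)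
  intro g
  constructor
  · intro hg
    obtain ⟨s, hs, x, y, hxy, rfl⟩ := exists_isBlockPair_sub_eq h2 hg
    obtain ⟨i, ⟨hi, his⟩, hi_unique⟩ := ZMod.existsUnique_natCast_eq_or_eq_neg hs
    have hmem : x ∈ block (i : ZMod (2 * n + 1)) ∧ y ∈ block (i : ZMod (2 * n + 1)) := by
      rcases his with h | h <;> simpa [h, block_neg] using hxy.mem_block
    refine ⟨(i, x, y), ⟨hi, hmem.1, hmem.2, fun h => hg (by simp [show x = y from h]), rfl⟩, ?_⟩
    rintro ⟨j, x', y'⟩ ⟨hj, hx', hy', hne', hsub⟩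
    obtain ⟨t, ht, hpair⟩ := exists_isBlockPair_of_mem_block hx' hy' hne'
    obtain ⟨rfl, rfl, rfl⟩ := hpair.eq_of_sub_eq h2 hxy hsub
    obtain rfl := hi_unique j ⟨hj, by rcases ht with rfl | rfl <;> simp⟩
    rfl
  · rintro hg ⟨⟨j, x, y⟩, hj, hx, hy, hne, rfl⟩
    obtain ⟨t, ht, hpair⟩ := exists_isBlockPair_of_mem_block hx hy hne
    have hj0 : (j : ZMod (2 * n + 1)) ≠ 0 := by
      rw [Finset.mem_Icc] at hj
      exact ZMod.natCast_ne_zero_of_pos_of_lt hj.1 (by omega)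
    refine hpair.sub_snd_ne_zero h2 ?_ hg
    rcases ht with rfl | rfl <;> simpa
end

section
/- For every even n ≥ 2 there exists a set of 2n−1 triples in Z_{12n} whose pairwise differences cover Z_{12n} \ {0, 3n, 4n, 6n, 8n, 9n} exactly once (a (Z_{12n}, {3,4}, 3, 1)-difference family). -/
/-!
A block `{0, a, c}` has the six differences `±a`, `±(c - a)`, `±c`. So blocks of this shape
form a difference family relative to `S` as soon as their half-differences `a, c - a, c` and
the negatives of these are pairwise distinct and exhaust the complement of `S`.

In `ZMod (12 n)` an element is determined up to sign by its absolute value `|valMinAbs|`, and the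
complement of `S = {0, 3n, 4n, 6n, 8n, 9n}` is the set of elements whose absolute value lies in
`{1, …, 6n - 1} \ {3n, 4n}`, a set of size `6n - 3 = 3 (2n - 1)`. It is therefore enough that the
half-differences of the `2n - 1` explicit base blocks have pairwise distinct absolute values in
that set, a Skolem-type condition checked by linear arithmetic.
-/

open Finset Function

def halfDiff {G ι : Type*} [Sub G] (a c : ι → G) (p : ι × Fin 3) : G :=
  ![a p.1, c p.1 - a p.1, c p.1] p.2

lemma Nat.cast_halfDiff {R ι : Type*} [AddGroupWithOne R] {a c : ι → ℕ} {p : ι × Fin 3}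
    (hac : a p.1 ≤ c p.1) :
    ((halfDiff a c p : ℕ) : R) = halfDiff (fun i => (a i : R)) (fun i => (c i : R)) p := by
  obtain ⟨i, k⟩ := p
  fin_cases k <;> simp [halfDiff, Nat.cast_sub hac]

section BaseBlocks

variable {G ι : Type*} [AddCommGroup G]

def IsRelDiffFamily (B : ι → Finset G) (S : Set G) : Prop :=
  (∀ g ∉ S, ∃! p : ι × G × G,
      p.2.1 ∈ B p.1 ∧ p.2.2 ∈ B p.1 ∧ p.2.1 ≠ p.2.2 ∧ p.2.1 - p.2.2 = g) ∧
    ∀ g ∈ S, ¬ ∃ p : ι × G × G,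
      p.2.1 ∈ B p.1 ∧ p.2.2 ∈ B p.1 ∧ p.2.1 ≠ p.2.2 ∧ p.2.1 - p.2.2 = g

def signed (s : Bool) (x : G) : G := if s then x else -x

lemma signed_ne_zero {x : G} (hx : x ≠ 0) (s : Bool) : signed s x ≠ 0 := by
  cases s <;> simpa [signed]

lemma signed_inj {X : Type*} {h : X → G} (hinj : Injective h) (hneg : ∀ x y, h x ≠ -h y)
    {x y : X} {s t : Bool} (hxy : signed s (h x) = signed t (h y)) : x = y ∧ s = t := by
  cases s <;> cases t <;>
    simp only [signed, ite_true, ite_false, Bool.false_eq_true, neg_inj] at hxy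
  · exact ⟨hinj hxy, rfl⟩
  · exact (hneg y x hxy.symm).elim
  · exact (hneg x y hxy).elim
  · exact ⟨hinj hxy, rfl⟩

def orientedPair (a c : ι → G) (p : ι × Fin 3) (s : Bool) : G × G :=
  if s then ![(a p.1, 0), (c p.1, a p.1), (c p.1, 0)] p.2
  else (![(a p.1, 0), (c p.1, a p.1), (c p.1, 0)] p.2).swap

lemma orientedPair_sub (a c : ι → G) (p : ι × Fin 3) (s : Bool) :
    (orientedPair a c p s).1 - (orientedPair a c p s).2 = signed s (halfDiff a c p) := by
  obtain ⟨i, k⟩ := p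
  fin_cases k <;> cases s <;> simp [orientedPair, signed, halfDiff]

variable [DecidableEq G]

lemma orientedPair_mem (a c : ι → G) (p : ι × Fin 3) (s : Bool) :
    (orientedPair a c p s).1 ∈ ({0, a p.1, c p.1} : Finset G) ∧
      (orientedPair a c p s).2 ∈ ({0, a p.1, c p.1} : Finset G) := by
  obtain ⟨i, k⟩ := p
  fin_cases k <;> cases s <;> simp [orientedPair]

lemma exists_orientedPair_eq {a c : ι → G} {i : ι} {x y : G}
    (hx : x ∈ ({0, a i, c i} : Finset G)) (hy : y ∈ ({0, a i, c i} : Finset G))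
    (hxy : x ≠ y) : ∃ k s, orientedPair a c (i, k) s = (x, y) := by
  simp only [mem_insert, mem_singleton] at hx hy
  rcases hx with rfl | rfl | rfl <;> rcases hy with rfl | rfl | rfl <;>
    first
    | exact absurd rfl hxy
    | exact ⟨0, true, rfl⟩ | exact ⟨0, false, rfl⟩ | exact ⟨1, true, rfl⟩
    | exact ⟨1, false, rfl⟩ | exact ⟨2, true, rfl⟩ | exact ⟨2, false, rfl⟩

variable {a c : ι → G}

lemma card_baseBlock (hneg : ∀ p q, halfDiff a c p ≠ -halfDiff a c q) (i : ι) :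
    ({0, a i, c i} : Finset G).card = 3 := by
  have hne : ∀ k, halfDiff a c (i, k) ≠ 0 := fun k h => hneg (i, k) (i, k) (by rw [h, neg_zero])
  refine card_eq_three.2 ⟨0, a i, c i, (hne 0).symm, (hne 2).symm, fun h => hne 1 ?_, rfl⟩
  simp [halfDiff, h]

theorem isRelDiffFamily_baseBlocks {S : Set G} (hinj : Injective (halfDiff a c))
    (hneg : ∀ p q, halfDiff a c p ≠ -halfDiff a c q)
    (hcompl : ∀ g, g ∉ S ↔ ∃ p, g = halfDiff a c p ∨ g = -halfDiff a c p) :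
    IsRelDiffFamily (fun i => {0, a i, c i}) S := by
  have hrep : ∀ {i x y}, x ∈ ({0, a i, c i} : Finset G) → y ∈ ({0, a i, c i} : Finset G) →
      x ≠ y → ∃ k s,
        orientedPair a c (i, k) s = (x, y) ∧ x - y = signed s (halfDiff a c (i, k)) := by
    intro i x y hx hy hxy
    obtain ⟨k, s, hks⟩ := exists_orientedPair_eq hx hy hxy
    exact ⟨k, s, hks, by rw [← orientedPair_sub, hks]⟩
  refine ⟨fun g hg => ?_, fun g hg ⟨⟨i, x, y⟩, hx, hy, hxy, hg'⟩ => ?_⟩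
  · obtain ⟨p, s, rfl⟩ : ∃ p s, g = signed s (halfDiff a c p) := by
      obtain ⟨p, hp | hp⟩ := (hcompl g).1 hg
      exacts [⟨p, true, hp⟩, ⟨p, false, hp⟩]
    have hne : halfDiff a c p ≠ 0 := fun h => hneg p p (by rw [h, neg_zero])
    obtain ⟨hx, hy⟩ := orientedPair_mem a c p s
    refine ⟨(p.1, orientedPair a c p s),
      ⟨hx, hy, fun h => signed_ne_zero hne s ?_, orientedPair_sub a c p s⟩, ?_⟩
    · rw [← orientedPair_sub, h, sub_self]
    rintro ⟨i, x, y⟩ ⟨hx, hy, hxy, hg⟩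
    obtain ⟨k, t, hpair, hsub⟩ := hrep hx hy hxy
    obtain ⟨rfl, rfl⟩ := signed_inj hinj hneg (hsub.symm.trans hg)
    rw [← hpair]
  · obtain ⟨k, s, -, hsub⟩ := hrep hx hy hxy
    refine (hcompl g).2 ⟨(i, k), ?_⟩ hg
    cases s
    · exact Or.inr (hg'.symm.trans hsub)
    · exact Or.inl (hg'.symm.trans hsub)

end BaseBlocks

namespace ZMod

variable {m : ℕ} [NeZero m]

lemma eq_natCast_iff_val_eq {k : ℕ} (hk : k < m) {g : ZMod m} : g = k ↔ g.val = k := by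
  rw [← (val_injective m).eq_iff, val_natCast_of_lt hk]

lemma ne_neg_of_injective_natAbs_valMinAbs {X : Type*} {h : X → ZMod m}
    (hinj : Injective fun x => (h x).valMinAbs.natAbs)
    (hpos : ∀ x, 0 < (h x).valMinAbs.natAbs) (hhalf : ∀ x, 2 * (h x).valMinAbs.natAbs < m)
    (x y : X) : h x ≠ -h y := by
  intro hxy
  obtain rfl : x = y := hinj (natAbs_valMinAbs_eq_natAbs_valMinAbs.2 (Or.inr hxy))
  rcases (neg_eq_self_iff (h x)).1 hxy.symm with h0 | h2
  · exact (hpos x).ne' (by simp [h0])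
  · have := hhalf x
    rw [valMinAbs_natAbs_eq_min] at this
    omega

end ZMod

section Z12n

variable {n : ℕ}

/-- The base block `{0, a, c}` as the pair `(a, c)`: three sporadic blocks, then two runs of
`n - 2` blocks whose half-differences run through arithmetic progressions. -/
def baseBlock (n : ℕ) (i : Fin (2 * n - 1)) : ℕ × ℕ :=
  if (i : ℕ) = 0 then (1, 3 * n - 1)
  else if (i : ℕ) = 1 then (3, 6 * n + 1)
  else if (i : ℕ) = 2 then (2 * n - 2, 5 * n - 1)
  else if (i : ℕ) ≤ n then (2 * n + 5 - 2 * i, 4 * n + 2 - i)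
  else (4 * n - 2 - 2 * i, 7 * n - 2 - i)

lemma baseBlock_cases (hn : 2 ≤ n) (i : Fin (2 * n - 1)) :
    ((i : ℕ) = 0 ∧ (baseBlock n i).1 = 1 ∧ (baseBlock n i).2 = 3 * n - 1) ∨
    ((i : ℕ) = 1 ∧ (baseBlock n i).1 = 3 ∧ (baseBlock n i).2 = 6 * n + 1) ∨
    ((i : ℕ) = 2 ∧ (baseBlock n i).1 = 2 * n - 2 ∧ (baseBlock n i).2 = 5 * n - 1) ∨
    (3 ≤ (i : ℕ) ∧ (i : ℕ) ≤ n ∧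
      (baseBlock n i).1 = 2 * n + 5 - 2 * i ∧ (baseBlock n i).2 = 4 * n + 2 - i) ∨
    (n < (i : ℕ) ∧ (i : ℕ) < 2 * n - 1 ∧
      (baseBlock n i).1 = 4 * n - 2 - 2 * i ∧ (baseBlock n i).2 = 7 * n - 2 - i) := by
  have := i.isLt
  unfold baseBlock
  split_ifs <;> omega

def natHalfDiff (n : ℕ) : Fin (2 * n - 1) × Fin 3 → ℕ :=
  halfDiff (fun i => (baseBlock n i).1) (fun i => (baseBlock n i).2)

@[simp] lemma natHalfDiff_zero (i : Fin (2 * n - 1)) :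
    natHalfDiff n (i, 0) = (baseBlock n i).1 := rfl

@[simp] lemma natHalfDiff_one (i : Fin (2 * n - 1)) :
    natHalfDiff n (i, 1) = (baseBlock n i).2 - (baseBlock n i).1 := rfl

@[simp] lemma natHalfDiff_two (i : Fin (2 * n - 1)) :
    natHalfDiff n (i, 2) = (baseBlock n i).2 := rfl

/-- The absolute value of `natHalfDiff n p < 12 * n` as an element of `ZMod (12 * n)`. -/
def absHalfDiff (n : ℕ) (p : Fin (2 * n - 1) × Fin 3) : ℕ :=
  min (natHalfDiff n p) (12 * n - natHalfDiff n p)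

def targetAbs (n : ℕ) : Finset ℕ :=
  Ioo 0 (6 * n) \ {3 * n, 4 * n}

lemma baseBlock_fst_le_snd (hn : 2 ≤ n) (i : Fin (2 * n - 1)) :
    (baseBlock n i).1 ≤ (baseBlock n i).2 := by
  have := baseBlock_cases hn i
  omega

lemma natHalfDiff_lt (hn : 2 ≤ n) (p : Fin (2 * n - 1) × Fin 3) : natHalfDiff n p < 12 * n := by
  obtain ⟨i, k⟩ := p
  have := baseBlock_cases hn i
  fin_cases k <;> simp <;> omega

lemma absHalfDiff_mem_targetAbs (hn : 2 ≤ n) (p : Fin (2 * n - 1) × Fin 3) :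
    absHalfDiff n p ∈ targetAbs n := by
  obtain ⟨i, k⟩ := p
  have := baseBlock_cases hn i
  simp only [absHalfDiff, targetAbs, mem_sdiff, mem_Ioo, mem_insert, mem_singleton]
  fin_cases k <;> simp <;> omega

lemma absHalfDiff_cases (hn : 2 ≤ n) (i : Fin (2 * n - 1)) :
    ((i : ℕ) = 0 ∧ absHalfDiff n (i, 0) = 1 ∧ absHalfDiff n (i, 1) = 3 * n - 2 ∧
      absHalfDiff n (i, 2) = 3 * n - 1) ∨
    ((i : ℕ) = 1 ∧ absHalfDiff n (i, 0) = 3 ∧ absHalfDiff n (i, 1) = 6 * n - 2 ∧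
      absHalfDiff n (i, 2) = 6 * n - 1) ∨
    ((i : ℕ) = 2 ∧ absHalfDiff n (i, 0) = 2 * n - 2 ∧ absHalfDiff n (i, 1) = 3 * n + 1 ∧
      absHalfDiff n (i, 2) = 5 * n - 1) ∨
    (3 ≤ (i : ℕ) ∧ (i : ℕ) ≤ n ∧ absHalfDiff n (i, 0) = 2 * n + 5 - 2 * i ∧
      absHalfDiff n (i, 1) = 2 * n - 3 + i ∧ absHalfDiff n (i, 2) = 4 * n + 2 - i) ∨
    (n < (i : ℕ) ∧ (i : ℕ) < 2 * n - 1 ∧ absHalfDiff n (i, 0) = 4 * n - 2 - 2 * i ∧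
      absHalfDiff n (i, 1) = 3 * n + i ∧ absHalfDiff n (i, 2) = 7 * n - 2 - i) := by
  simp only [absHalfDiff, natHalfDiff_zero, natHalfDiff_one, natHalfDiff_two]
  rcases baseBlock_cases hn i with h | h | h | h | h
  · exact Or.inl (by omega)
  · exact Or.inr <| Or.inl (by omega)
  · exact Or.inr <| Or.inr <| Or.inl (by omega)
  · exact Or.inr <| Or.inr <| Or.inr <| Or.inl (by omega)
  · exact Or.inr <| Or.inr <| Or.inr <| Or.inr (by omega)

lemma absHalfDiff_injective (hn : 2 ≤ n) : Injective (absHalfDiff n) := by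
  rintro ⟨i, k⟩ ⟨j, l⟩ h
  suffices (i : ℕ) = j ∧ (k : ℕ) = l from Prod.ext (Fin.ext this.1) (Fin.ext this.2)
  have hi := absHalfDiff_cases hn i
  have hj := absHalfDiff_cases hn j
  fin_cases k <;> fin_cases l <;>
    simp only [Fin.zero_eta, Fin.mk_one, Fin.reduceFinMk, and_true] at h ⊢ <;> omega

lemma card_targetAbs (hn : 0 < n) : (targetAbs n).card = 6 * n - 3 := by
  rw [targetAbs, card_sdiff_of_subset, Nat.card_Ioo, card_pair (by omega)]
  · omega
  · intro t
    simp only [mem_insert, mem_singleton, mem_Ioo]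
    omega

lemma exists_absHalfDiff_eq (hn : 2 ≤ n) {t : ℕ} (ht : t ∈ targetAbs n) :
    ∃ p, absHalfDiff n p = t := by
  obtain ⟨p, -, hp⟩ := surj_on_of_inj_on_of_card_le (s := univ) (fun p _ => absHalfDiff n p)
    (fun p _ => absHalfDiff_mem_targetAbs hn p) (fun p q _ _ h => absHalfDiff_injective hn h)
    (by simp [card_targetAbs (by omega : 0 < n)]; omega) t ht
  exact ⟨p, hp.symm⟩

lemma natAbs_valMinAbs_halfDiff (hn : 2 ≤ n) (p : Fin (2 * n - 1) × Fin 3) :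
    (halfDiff (fun i => ((baseBlock n i).1 : ZMod (12 * n)))
      (fun i => ((baseBlock n i).2 : ZMod (12 * n))) p).valMinAbs.natAbs = absHalfDiff n p := by
  have : NeZero (12 * n) := ⟨by omega⟩
  have hcast : ((natHalfDiff n p : ℕ) : ZMod (12 * n)) = halfDiff _ _ p :=
    Nat.cast_halfDiff (baseBlock_fst_le_snd hn p.1)
  rw [← hcast, ZMod.valMinAbs_natAbs_eq_min, ZMod.val_natCast_of_lt (natHalfDiff_lt hn p)]
  rfl

/-- The union of the subgroups of orders 3 and 4 of `ZMod (12 * n)`. -/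
def spreadUnion (n : ℕ) : Set (ZMod (12 * n)) :=
  {0, ((3 * n : ℕ) : ZMod (12 * n)), ((4 * n : ℕ) : ZMod (12 * n)),
    ((6 * n : ℕ) : ZMod (12 * n)), ((8 * n : ℕ) : ZMod (12 * n)),
    ((9 * n : ℕ) : ZMod (12 * n))}

lemma natAbs_valMinAbs_mem_targetAbs_iff (hn : 0 < n) (g : ZMod (12 * n)) :
    g.valMinAbs.natAbs ∈ targetAbs n ↔ g ∉ spreadUnion n := by
  have : NeZero (12 * n) := ⟨by omega⟩
  have := g.val_lt
  simp only [targetAbs, spreadUnion, mem_sdiff, mem_Ioo, mem_insert, mem_singleton,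
    Set.mem_insert_iff, Set.mem_singleton_iff, ← ZMod.val_eq_zero, ZMod.valMinAbs_natAbs_eq_min,
    ZMod.eq_natCast_iff_val_eq (by omega : 3 * n < 12 * n),
    ZMod.eq_natCast_iff_val_eq (by omega : 4 * n < 12 * n),
    ZMod.eq_natCast_iff_val_eq (by omega : 6 * n < 12 * n),
    ZMod.eq_natCast_iff_val_eq (by omega : 8 * n < 12 * n),
    ZMod.eq_natCast_iff_val_eq (by omega : 9 * n < 12 * n)]
  omega

end Z12n

theorem difference_family_Z12n_general (n : ℕ) (hn : 2 ≤ n) :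
    ∃ B : Fin (2 * n - 1) → Finset (ZMod (12 * n)),
      (∀ i, (B i).card = 3) ∧
      (∀ g : ZMod (12 * n),
        g ∉ ({0, ((3 * n : ℕ) : ZMod (12 * n)), ((4 * n : ℕ) : ZMod (12 * n)),
              ((6 * n : ℕ) : ZMod (12 * n)), ((8 * n : ℕ) : ZMod (12 * n)),
              ((9 * n : ℕ) : ZMod (12 * n))} : Set (ZMod (12 * n))) →
        ∃! p : Fin (2 * n - 1) × ZMod (12 * n) × ZMod (12 * n),
          p.2.1 ∈ B p.1 ∧ p.2.2 ∈ B p.1 ∧ p.2.1 ≠ p.2.2 ∧ p.2.1 - p.2.2 = g) ∧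
      (∀ g ∈ ({0, ((3 * n : ℕ) : ZMod (12 * n)), ((4 * n : ℕ) : ZMod (12 * n)),
              ((6 * n : ℕ) : ZMod (12 * n)), ((8 * n : ℕ) : ZMod (12 * n)),
              ((9 * n : ℕ) : ZMod (12 * n))} : Set (ZMod (12 * n))),
        ¬ ∃ p : Fin (2 * n - 1) × ZMod (12 * n) × ZMod (12 * n),
          p.2.1 ∈ B p.1 ∧ p.2.2 ∈ B p.1 ∧ p.2.1 ≠ p.2.2 ∧ p.2.1 - p.2.2 = g) := by
  have : NeZero (12 * n) := ⟨by omega⟩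
  set a : Fin (2 * n - 1) → ZMod (12 * n) := fun i => ((baseBlock n i).1 : ℕ)
  set c : Fin (2 * n - 1) → ZMod (12 * n) := fun i => ((baseBlock n i).2 : ℕ)
  have habs : ∀ p, (halfDiff a c p).valMinAbs.natAbs = absHalfDiff n p :=
    natAbs_valMinAbs_halfDiff hn
  have hbound : ∀ p, 0 < absHalfDiff n p ∧ absHalfDiff n p < 6 * n := fun p =>
    mem_Ioo.1 (mem_sdiff.1 (absHalfDiff_mem_targetAbs hn p)).1
  have hinj : Injective fun p => (halfDiff a c p).valMinAbs.natAbs := by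
    simpa only [habs] using absHalfDiff_injective hn
  have hneg := ZMod.ne_neg_of_injective_natAbs_valMinAbs hinj
    (fun p => habs p ▸ (hbound p).1) (fun p => by rw [habs]; have := (hbound p).2; omega)
  have hcompl :
      ∀ g, g ∉ spreadUnion n ↔ ∃ p, g = halfDiff a c p ∨ g = -halfDiff a c p := by
    intro g
    simp_rw [← ZMod.natAbs_valMinAbs_eq_natAbs_valMinAbs, habs,
      ← natAbs_valMinAbs_mem_targetAbs_iff (by omega : 0 < n)]
    exact ⟨fun h => (exists_absHalfDiff_eq hn h).imp fun _ => Eq.symm,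
      fun ⟨p, hp⟩ => hp ▸ absHalfDiff_mem_targetAbs hn p⟩
  have hdf :=
    isRelDiffFamily_baseBlocks (hinj.of_comp (f := fun x => x.valMinAbs.natAbs)) hneg hcompl
  exact ⟨_, card_baseBlock hneg, hdf.1, hdf.2⟩

/-- For every even `n ≥ 2` there exists a `(ℤ_{12n}, {3,4}, 3, 1)` difference family:
`2n - 1` blocks of size 3 in `ℤ_{12n}` whose differences of distinct elements cover
every element of `ℤ_{12n} \ {0, 3n, 4n, 6n, 8n, 9n}` exactly once, and cover no element
of `{0, 3n, 4n, 6n, 8n, 9n}`. -/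
theorem difference_family_Z12n (n : ℕ) (hn : 2 ≤ n) (heven : Even n) :
    ∃ B : Fin (2 * n - 1) → Finset (ZMod (12 * n)),
      (∀ i, (B i).card = 3) ∧
      (∀ g : ZMod (12 * n),
        g ∉ ({0, ((3 * n : ℕ) : ZMod (12 * n)), ((4 * n : ℕ) : ZMod (12 * n)),
              ((6 * n : ℕ) : ZMod (12 * n)), ((8 * n : ℕ) : ZMod (12 * n)),
              ((9 * n : ℕ) : ZMod (12 * n))} : Set (ZMod (12 * n))) →
        ∃! p : Fin (2 * n - 1) × ZMod (12 * n) × ZMod (12 * n),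
          p.2.1 ∈ B p.1 ∧ p.2.2 ∈ B p.1 ∧ p.2.1 ≠ p.2.2 ∧ p.2.1 - p.2.2 = g) ∧
      (∀ g ∈ ({0, ((3 * n : ℕ) : ZMod (12 * n)), ((4 * n : ℕ) : ZMod (12 * n)),
              ((6 * n : ℕ) : ZMod (12 * n)), ((8 * n : ℕ) : ZMod (12 * n)),
              ((9 * n : ℕ) : ZMod (12 * n))} : Set (ZMod (12 * n))),
        ¬ ∃ p : Fin (2 * n - 1) × ZMod (12 * n) × ZMod (12 * n),
          p.2.1 ∈ B p.1 ∧ p.2.2 ∈ B p.1 ∧ p.2.1 ≠ p.2.2 ∧ p.2.1 - p.2.2 = g) :=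
  difference_family_Z12n_general n hn
end

section
/- (Necessary direction of Skolem parity condition) If a k-extended Skolem sequence of order n exists, then k is odd when n ≡ 0, 1 (mod 4) and k is even when n ≡ 2, 3 (mod 4). -/
/-- A `k`-extended Skolem sequence of order `n`: a sequence `s₁, …, sₙ` such that the
pairs `{sᵢ, sᵢ + i}` partition `{1, …, 2n+1} \ {k}`. -/
def IsExtendedSkolem (k n : ℕ) : Prop :=
  ∃ s : ℕ → ℕ,
    (Finset.Icc 1 n).biUnion (fun i => {s i, s i + i}) = (Finset.Icc 1 (2 * n + 1)).erase k

/-!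
Summing the pairs `{sᵢ, sᵢ + i}` gives `2 ∑ sᵢ + ∑ i`, which is the sum of `{1, …, 2n+1}`
with `k` removed. Hence `k ≡ T(2n+1) - T(n) (mod 2)` for the triangular numbers `T`, and
`T(m)` is even exactly when `m ≡ 0, 3 (mod 4)`. That the pairs are disjoint follows by counting:
the `n` pairs have `2n` elements between them and their union has `2n` elements.
-/

open Finset

theorem Finset.card_biUnion_eq_sum_card_iff {ι α : Type*} [DecidableEq ι] [DecidableEq α]
    {s : Finset ι} {t : ι → Finset α} :
    #(s.biUnion t) = ∑ i ∈ s, #(t i) ↔ (s : Set ι).PairwiseDisjoint t := by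
  refine ⟨fun h => ?_, card_biUnion⟩
  induction s using Finset.induction_on with
  | empty => simp
  | insert a s ha ih =>
    rw [biUnion_insert, sum_insert ha] at h
    have hle : #(s.biUnion t) ≤ ∑ i ∈ s, #(t i) := card_biUnion_le
    have hunion := card_union_le (t a) (s.biUnion t)
    have hdisj : Disjoint (t a) (s.biUnion t) := card_union_eq_card_add_card.mp (by omega)
    rw [coe_insert]
    refine (ih (by omega)).insert fun j hj _ => ?_
    exact (disjoint_biUnion_right _ _ _).mp hdisj j hj

theorem even_sum_Icc_one_id_iff (n : ℕ) :
    Even (∑ i ∈ Icc 1 n, i) ↔ n % 4 = 0 ∨ n % 4 = 3 := by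
  induction n with
  | zero => simp
  | succ n ih =>
    rw [sum_Icc_succ_top (by omega), Nat.even_add]
    simp only [Nat.even_iff] at ih ⊢
    omega

section SkolemPairs

variable {k n : ℕ} {s : ℕ → ℕ}
  (hs : (Icc 1 n).biUnion (fun i => {s i, s i + i}) = (Icc 1 (2 * n + 1)).erase k)
include hs

theorem mem_Icc_of_skolem_pairs : k ∈ Icc 1 (2 * n + 1) := by
  by_contra hk
  have hcard : #((Icc 1 n).biUnion (fun i => {s i, s i + i})) ≤ #(Icc 1 n) * 2 :=
    card_biUnion_le_card_mul _ _ _ fun _ _ => card_le_two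
  rw [hs, erase_eq_of_notMem hk, Nat.card_Icc, Nat.card_Icc] at hcard
  omega

theorem pairwiseDisjoint_skolem_pairs :
    ((Icc 1 n : Finset ℕ) : Set ℕ).PairwiseDisjoint (fun i => ({s i, s i + i} : Finset ℕ)) := by
  refine card_biUnion_eq_sum_card_iff.mp ?_
  have hpair : ∀ i ∈ Icc 1 n, #({s i, s i + i} : Finset ℕ) = 2 := fun i hi =>
    card_pair (by simp only [mem_Icc] at hi; omega)
  rw [hs, card_erase_of_mem (mem_Icc_of_skolem_pairs hs), sum_const_nat hpair,
    Nat.card_Icc, Nat.card_Icc]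
  omega

theorem sum_Icc_eq_of_skolem_pairs :
    ∑ x ∈ Icc 1 (2 * n + 1), x = k + 2 * ∑ i ∈ Icc 1 n, s i + ∑ i ∈ Icc 1 n, i := by
  rw [← add_sum_erase _ _ (mem_Icc_of_skolem_pairs hs), ← hs,
    sum_biUnion (pairwiseDisjoint_skolem_pairs hs), add_assoc, mul_sum, ← sum_add_distrib]
  refine congrArg _ (sum_congr rfl fun i hi => ?_)
  rw [sum_pair (by simp only [mem_Icc] at hi; omega)]
  ring

end SkolemPairs

theorem extended_skolem_parity_general (k n : ℕ) (h : IsExtendedSkolem k n) :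
    ((n % 4 = 0 ∨ n % 4 = 1) → Odd k) ∧ ((n % 4 = 2 ∨ n % 4 = 3) → Even k) := by
  obtain ⟨s, hs⟩ := h
  have hsum := sum_Icc_eq_of_skolem_pairs hs
  have hlong := even_sum_Icc_one_id_iff (2 * n + 1)
  have hshort := even_sum_Icc_one_id_iff n
  simp only [Nat.even_iff, Nat.odd_iff] at hlong hshort ⊢
  omega

/-- Necessary parity condition: if a `k`-extended Skolem sequence of order `n` exists,
then `k` is odd when `n ≡ 0, 1 (mod 4)` and `k` is even when `n ≡ 2, 3 (mod 4)`. -/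
theorem extended_skolem_parity (k n : ℕ) (hn : 1 ≤ n) (hk1 : 1 ≤ k) (hk2 : k ≤ 2 * n + 1)
    (h : IsExtendedSkolem k n) :
    ((n % 4 = 0 ∨ n % 4 = 1) → Odd k) ∧ ((n % 4 = 2 ∨ n % 4 = 3) → Even k) :=
  extended_skolem_parity_general k n h
end

section
/- In an f-pyramidal STS(v) with point set F ∪ G (G acting by right translation on itself, fixing F pointwise), for each fixed point ∞_i the third point x_i of the block through ∞_i and 0 is an involution of G, and the map ∞_i ↦ x_i is a bijection between F and the set of involutions of G; in particular G has exactly f involutions. -/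
/-- `B` is the block set of a Steiner triple system on `V`: every block has 3 points and
any two distinct points lie in exactly one block. -/
def IsSTS {V : Type*} (B : Set (Finset V)) : Prop :=
  (∀ b ∈ B, b.card = 3) ∧ ∀ x y : V, x ≠ y → ∃! b, b ∈ B ∧ x ∈ b ∧ y ∈ b

/-!
A block through two fixed points `∞ᵢ, ∞ⱼ` is preserved by every translation, so it contains no
point of the nontrivial group `G`; hence the block through `∞ᵢ` and `0` is `{∞ᵢ, 0, t}`, `t ∈ G`.
Translating the block `{∞ᵢ, 0, t}` by `t` gives a block through `∞ᵢ` and `t`, which must be the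
same block, so `t + t ∈ {0, t}` and `t` is an involution. Conversely, for an involution `g` the
block `{0, g, c}` is mapped to itself by translation by `g`, and `c ∈ G` would give the impossible
`c + g ∈ {0, g, c}`, so `c` is a fixed point `∞ⱼ` and `g = xⱼ`. Distinct `∞ᵢ` give distinct `xᵢ` because `0` and `xᵢ`
lie in one block only.
-/

lemma Finset.exists_eq_insert_insert_singleton_of_card_eq_three {α : Type*} [DecidableEq α]
    {s : Finset α} (hs : s.card = 3) {a b : α} (ha : a ∈ s) (hb : b ∈ s) (hab : a ≠ b) :
    ∃ c, c ≠ a ∧ c ≠ b ∧ s = {a, b, c} := by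
  have hb' : b ∈ s.erase a := mem_erase.2 ⟨hab.symm, hb⟩
  obtain ⟨c, hc⟩ : ∃ c, (s.erase a).erase b = {c} := by
    rw [← card_eq_one, card_erase_of_mem hb', card_erase_of_mem ha, hs]
  have hc' : c ∈ (s.erase a).erase b := hc ▸ mem_singleton_self c
  refine ⟨c, ne_of_mem_erase (mem_of_mem_erase hc'), ne_of_mem_erase hc', ?_⟩
  rw [← hc, insert_erase hb', insert_erase ha]

namespace IsSTS

variable {V : Type*} {B : Set (Finset V)}

lemma eq_of_mem (hS : IsSTS B) {b b' : Finset V} (hb : b ∈ B) (hb' : b' ∈ B) {x y : V}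
    (hxy : x ≠ y) (hx : x ∈ b) (hy : y ∈ b) (hx' : x ∈ b') (hy' : y ∈ b') : b = b' :=
  (hS.2 x y hxy).unique ⟨hb, hx, hy⟩ ⟨hb', hx', hy'⟩

lemma exists_insert_insert_singleton_mem [DecidableEq V] (hS : IsSTS B) {x y : V} (hxy : x ≠ y) :
    ∃ z, z ≠ x ∧ z ≠ y ∧ ({x, y, z} : Finset V) ∈ B := by
  obtain ⟨b, ⟨hb, hx, hy⟩, -⟩ := hS.2 x y hxy
  obtain ⟨z, hzx, hzy, rfl⟩ :=
    Finset.exists_eq_insert_insert_singleton_of_card_eq_three (hS.1 b hb) hx hy hxy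
  exact ⟨z, hzx, hzy, hb⟩

lemma apply_mem_of_image_mem [DecidableEq V] (hS : IsSTS B) {σ : V → V} {b : Finset V}
    (hb : b ∈ B) (hσb : b.image σ ∈ B) {x y : V} (hxy : x ≠ y) (hx : x ∈ b) (hy : y ∈ b)
    (hσx : x ∈ b.image σ) (hσy : y ∈ b.image σ) {z : V} (hz : z ∈ b) : σ z ∈ b :=
  hS.eq_of_mem hσb hb hxy hσx hσy hx hy ▸ Finset.mem_image_of_mem σ hz

end IsSTS

namespace PyramidalSTS

variable {α G : Type*} [DecidableEq α] [AddGroup G] [DecidableEq G] {B : Set (Finset (α ⊕ G))}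

def IsTranslationInvariant (B : Set (Finset (α ⊕ G))) : Prop :=
  ∀ g : G, ∀ b ∈ B, b.image (Sum.map id (· + g)) ∈ B

lemma insert_inl_inl_inr_notMem [Nontrivial G] (hS : IsSTS B)
    (hinv : IsTranslationInvariant B) {i j : α} (hij : i ≠ j) (h : G) :
    ({.inl i, .inl j, .inr h} : Finset (α ⊕ G)) ∉ B := by
  intro hb
  obtain ⟨g, hg⟩ := exists_ne (0 : G)
  have hmem := hS.apply_mem_of_image_mem hb (hinv g _ hb) (x := .inl i) (y := .inl j) (by simpa)
    (by simp) (by simp) (by simp) (by simp) (z := .inr h) (by simp)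
  simp [hg] at hmem

lemma add_self_eq_zero_of_mem (hS : IsSTS B)
    (hinv : IsTranslationInvariant B) {i : α} {t : G} (ht : t ≠ 0)
    (hb : ({.inl i, .inr 0, .inr t} : Finset (α ⊕ G)) ∈ B) : t + t = 0 := by
  have hmem := hS.apply_mem_of_image_mem hb (hinv t _ hb) (x := .inl i) (y := .inr t) (by simp)
    (by simp) (by simp) (by simp) (by simp) (z := .inr t) (by simp)
  simpa [ht] using hmem

lemma insert_inr_inr_inr_notMem (hS : IsSTS B)
    (hinv : IsTranslationInvariant B) {g h : G} (hg2 : g + g = 0)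
    (hg : g ≠ 0) (h0 : h ≠ 0) (hhg : h ≠ g) :
    ({.inr 0, .inr g, .inr h} : Finset (α ⊕ G)) ∉ B := by
  intro hb
  have hmem := hS.apply_mem_of_image_mem hb (hinv g _ hb) (x := .inr 0) (y := .inr g)
    (by simpa using hg.symm) (by simp) (by simp) (by simp [hg2]) (by simp) (z := .inr h) (by simp)
  simp only [Sum.map_inr, Finset.mem_insert, Finset.mem_singleton, Sum.inr.injEq,
    add_eq_zero_iff_eq_neg, neg_eq_of_add_eq_zero_left hg2, add_eq_right, add_eq_left] at hmem
  tauto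

lemma exists_add_self_eq_zero_of_mem [Nontrivial G] (hS : IsSTS B)
    (hinv : IsTranslationInvariant B) (i : α) :
    ∃ t : G, t + t = 0 ∧ t ≠ 0 ∧ ({.inl i, .inr 0, .inr t} : Finset (α ⊕ G)) ∈ B := by
  obtain ⟨c, hci, hc0, hb⟩ :=
    hS.exists_insert_insert_singleton_mem (x := .inl i) (y := .inr (0 : G)) Sum.inl_ne_inr
  rcases c with j | t
  · rw [Finset.pair_comm] at hb
    exact absurd hb (insert_inl_inl_inr_notMem hS hinv (fun h => hci (by rw [h])) 0)
  · have ht : t ≠ 0 := fun h => hc0 (h ▸ rfl)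
    exact ⟨t, add_self_eq_zero_of_mem hS hinv ht hb, ht, hb⟩

lemma exists_inl_mem_of_add_self_eq_zero (hS : IsSTS B)
    (hinv : IsTranslationInvariant B) {g : G} (hg2 : g + g = 0)
    (hg : g ≠ 0) : ∃ j : α, ({.inl j, .inr 0, .inr g} : Finset (α ⊕ G)) ∈ B := by
  obtain ⟨c, hc0, hcg, hb⟩ :=
    hS.exists_insert_insert_singleton_mem (x := .inr 0) (y := .inr g) (by simpa using hg.symm)
  rcases c with j | h
  · rw [Finset.pair_comm, Finset.insert_comm] at hb
    exact ⟨j, hb⟩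
  · exact absurd hb (insert_inr_inr_inr_notMem hS hinv hg2 hg (fun h' => hc0 (h' ▸ rfl))
      (fun h' => hcg (h' ▸ rfl)))

end PyramidalSTS

open PyramidalSTS in
theorem pyramidal_sts_involutions_general
    {G : Type*} [AddGroup G] [DecidableEq G] (f : ℕ)
    (B : Set (Finset (Sum (Fin f) G))) (hSTS : IsSTS B)
    (hinv : ∀ (g : G), ∀ b ∈ B, b.image (Sum.map id (· + g)) ∈ B)
    (hfix : {p : Sum (Fin f) G | ∀ g : G, Sum.map id (· + g) p = p} = Set.range Sum.inl) :
    ∃ x : Fin f → G,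
      (∀ i, ({Sum.inl i, Sum.inr 0, Sum.inr (x i)} : Finset (Sum (Fin f) G)) ∈ B) ∧
      (∀ i, x i + x i = 0 ∧ x i ≠ 0) ∧
      Function.Injective x ∧
      (∀ g : G, g + g = 0 → g ≠ 0 → ∃ i, x i = g) := by
  have : Nontrivial G := by
    have h0 : (Sum.inr 0 : Fin f ⊕ G) ∉ {p | ∀ g : G, Sum.map id (· + g) p = p} := hfix ▸ by simp
    obtain ⟨g, hg⟩ : ∃ g : G, g ≠ 0 := by simpa using h0
    exact nontrivial_of_ne g 0 hg
  choose x hx2 hx0 hxB using exists_add_self_eq_zero_of_mem hSTS hinv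
  refine ⟨x, hxB, fun i => ⟨hx2 i, hx0 i⟩, fun i j hij => ?_, fun g hg2 hg => ?_⟩
  · have hB := hSTS.eq_of_mem (hxB i) (hxB j) (x := .inr 0) (y := .inr (x i))
      (by simpa using (hx0 i).symm) (by simp) (by simp) (by simp) (by simp [hij])
    have hi : Sum.inl i ∈ ({.inl j, .inr 0, .inr (x j)} : Finset (Fin f ⊕ G)) := hB ▸ by simp
    simpa using hi
  · obtain ⟨j, hj⟩ := exists_inl_mem_of_add_self_eq_zero hSTS hinv hg2 hg
    have hB := hSTS.eq_of_mem (hxB j) hj (x := .inl j) (y := .inr 0) Sum.inl_ne_inr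
      (by simp) (by simp) (by simp) (by simp)
    have hxj : Sum.inr (x j) ∈ ({.inl j, .inr 0, .inr g} : Finset (Fin f ⊕ G)) := hB ▸ by simp
    exact ⟨j, by simpa [hx0 j] using hxj⟩

/-- In an `f`-pyramidal STS with point set `F ∪ G` (`G` acting on itself by right
translation and fixing the `f` points of `F`, which are exactly the fixed points),
the block through `∞ᵢ` and `0` is `{∞ᵢ, 0, xᵢ}` where `xᵢ` is an involution of `G`,
and `∞ᵢ ↦ xᵢ` is a bijection between `F` and the set of involutions of `G`. -/
theorem pyramidal_sts_involutions
    {G : Type*} [AddGroup G] [Fintype G] [DecidableEq G] (f : ℕ)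
    (B : Set (Finset (Sum (Fin f) G))) (hSTS : IsSTS B)
    (hinv : ∀ (g : G), ∀ b ∈ B, b.image (Sum.map id (· + g)) ∈ B)
    (hfix : {p : Sum (Fin f) G | ∀ g : G, Sum.map id (· + g) p = p} = Set.range Sum.inl) :
    ∃ x : Fin f → G,
      (∀ i, ({Sum.inl i, Sum.inr 0, Sum.inr (x i)} : Finset (Sum (Fin f) G)) ∈ B) ∧
      (∀ i, x i + x i = 0 ∧ x i ≠ 0) ∧
      Function.Injective x ∧
      (∀ g : G, g + g = 0 → g ≠ 0 → ∃ i, x i = g) :=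
  pyramidal_sts_involutions_general f B hSTS hinv hfix
end
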